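/- Let U be a finite set and S a downward-closed collection of nonempty subsets of U (i.e., every nonempty subset of a member of S is in S) with a monotone cost function c : S → ℝ≥0 (i.e., S' ⊆ S implies c(S') ≤ c(S)). If A ⊆ S is a cover of U (every element of U lies in some member of A) of minimum total cost among all covers, then there exists a cover A' of U consisting of pairwise disjoint sets with the same total cost as A. -/
import Mathlib

theorem aux_disjointify {α : Type*} [DecidableEq α]
    (S : Finset (Finset α))
    (hdc : ∀ T ∈ S, ∀ T' ⊆ T, T'.Nonempty → T' ∈ S)
    (c : Finset α → NNReal)
    (hmono : ∀ T ∈ S, ∀ T' ∈ S, T' ⊆ T → c T' ≤ c T)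
    (A : Finset (Finset α)) (hA : A ⊆ S) :
    ∃ A' ⊆ S, (∀ e, (∃ T ∈ A, e ∈ T) → ∃ T ∈ A', e ∈ T) ∧
      (∀ T₁ ∈ A', ∀ T₂ ∈ A', T₁ ≠ T₂ → Disjoint T₁ T₂) ∧
      ∑ T ∈ A', c T ≤ ∑ T ∈ A, c T := by
  induction A using Finset.induction_on with
  | empty => exact ⟨∅, by simp, by simp, by simp, le_refl _⟩
  | @insert T A₀ hTA ih =>
    have hTS : T ∈ S := hA (Finset.mem_insert_self _ _)
    obtain ⟨A', hA'S, hcov, hdisj, hsum⟩ := ih (fun x hx => hA (Finset.mem_insert_of_mem hx))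
    set V : Finset α := A'.sup id with hV
    have hmemV : ∀ e, e ∈ V ↔ ∃ W ∈ A', e ∈ W := by
      intro e; simp [hV, Finset.mem_sup]
    by_cases h : (T \ V).Nonempty
    · have hT'S : T \ V ∈ S := hdc T hTS _ (Finset.sdiff_subset) h
      have hT'notin : T \ V ∉ A' := by
        intro hmem
        obtain ⟨e, he⟩ := h
        exact (Finset.mem_sdiff.mp he).2 ((hmemV e).mpr ⟨_, hmem, he⟩)
      refine ⟨insert (T \ V) A', ?_, ?_, ?_, ?_⟩
      · intro x hx
        rcases Finset.mem_insert.mp hx with rfl | hx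
        · exact hT'S
        · exact hA'S hx
      · intro e ⟨T'', hT'', he⟩
        rcases Finset.mem_insert.mp hT'' with rfl | hT''
        · by_cases hev : e ∈ V
          · obtain ⟨W, hW, heW⟩ := (hmemV e).mp hev
            exact ⟨W, Finset.mem_insert_of_mem hW, heW⟩
          · exact ⟨T'' \ V, Finset.mem_insert_self _ _, Finset.mem_sdiff.mpr ⟨he, hev⟩⟩
        · obtain ⟨W, hW, heW⟩ := hcov e ⟨T'', hT'', he⟩
          exact ⟨W, Finset.mem_insert_of_mem hW, heW⟩
      · intro T₁ h₁ T₂ h₂ hne12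
        have key : ∀ W ∈ A', Disjoint (T \ V) W := by
          intro W hW
          rw [Finset.disjoint_left]
          intro e he heW
          exact (Finset.mem_sdiff.mp he).2 ((hmemV e).mpr ⟨W, hW, heW⟩)
        rcases Finset.mem_insert.mp h₁ with rfl | h₁ <;>
          rcases Finset.mem_insert.mp h₂ with rfl | h₂
        · exact absurd rfl hne12
        · exact key _ h₂
        · exact (key _ h₁).symm
        · exact hdisj _ h₁ _ h₂ hne12
      · rw [Finset.sum_insert hT'notin, Finset.sum_insert hTA]
        exact add_le_add (hmono T hTS _ hT'S Finset.sdiff_subset) hsum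
    · have hTV : T ⊆ V := by
        intro e he
        by_contra hev
        exact h ⟨e, Finset.mem_sdiff.mpr ⟨he, hev⟩⟩
      refine ⟨A', hA'S, ?_, hdisj, ?_⟩
      · intro e ⟨T'', hT'', he⟩
        rcases Finset.mem_insert.mp hT'' with rfl | hT''
        · exact (hmemV e).mp (hTV he)
        · exact hcov e ⟨T'', hT'', he⟩
      · rw [Finset.sum_insert hTA]
        exact le_trans hsum (le_add_self)

theorem stmt_0 {α : Type*} [DecidableEq α] (U : Finset α)
    (S : Finset (Finset α))
    (hne : ∀ T ∈ S, T.Nonempty)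
    (hsub : ∀ T ∈ S, T ⊆ U)
    (hdc : ∀ T ∈ S, ∀ T' ⊆ T, T'.Nonempty → T' ∈ S)
    (c : Finset α → NNReal)
    (hmono : ∀ T ∈ S, ∀ T' ∈ S, T' ⊆ T → c T' ≤ c T)
    (A : Finset (Finset α)) (hA : A ⊆ S)
    (hcov : ∀ e ∈ U, ∃ T ∈ A, e ∈ T)
    (hmin : ∀ B ⊆ S, (∀ e ∈ U, ∃ T ∈ B, e ∈ T) → ∑ T ∈ A, c T ≤ ∑ T ∈ B, c T) :
    ∃ A' ⊆ S, (∀ e ∈ U, ∃ T ∈ A', e ∈ T) ∧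
      (∀ T₁ ∈ A', ∀ T₂ ∈ A', T₁ ≠ T₂ → Disjoint T₁ T₂) ∧
      ∑ T ∈ A', c T = ∑ T ∈ A, c T := by
  obtain ⟨A', hA'S, hcov', hdisj, hsum⟩ := aux_disjointify S hdc c hmono A hA
  have hcovU : ∀ e ∈ U, ∃ T ∈ A', e ∈ T := fun e he => hcov' e (hcov e he)
  exact ⟨A', hA'S, hcovU, hdisj, le_antisymm hsum (hmin A' hA'S hcovU)⟩
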